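/- arXiv:1412.0331 — 3 statements merged into one kernel-verified Lean document; each statement's English description precedes it below -/
import Mathlib

section
/- Let N ≥ 1, let γ ∈ ℝ, let f : ℝ × ℝ → ℝ be continuously differentiable, and let u : EuclideanSpace ℝ (Fin N) × ℝ → ℝ be smooth and satisfy the PDE u_t = u·Δu − γ·|∇u|² + f(t, u) on an open set, where ∇ and Δ are taken in the spatial variable x. Set w(x,t) = ½∑_{i=1}^N (∂_{x_i} u(x,t))². Then on that set w satisfies w_t = 2w·Δu + u·Δw − u·∑_{i=1}^N∑_{j=1}^N (∂_{x_i}∂_{x_j} u)² − 2γ·∑_{i=1}^N (∂_{x_i} u)·(∂_{x_i} w) + 2·(∂_u f)(t,u)·w. -/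
open scoped ContDiff

section DDHelpers

variable {E : Type*} [NormedAddCommGroup E] [NormedSpace ℝ E]

lemma dd_smooth {g : E → ℝ} (hg : ContDiff ℝ ∞ g) (v : E) :
    ContDiff ℝ ∞ (fun p => fderiv ℝ g p v) :=
  (hg.fderiv_right le_rfl).clm_apply contDiff_const

lemma dd_add {g h : E → ℝ} {p : E} (hg : DifferentiableAt ℝ g p)
    (hh : DifferentiableAt ℝ h p) (v : E) :
    fderiv ℝ (fun q => g q + h q) p v = fderiv ℝ g p v + fderiv ℝ h p v := by
  rw [fderiv_fun_add hg hh]; rfl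

lemma dd_sub {g h : E → ℝ} {p : E} (hg : DifferentiableAt ℝ g p)
    (hh : DifferentiableAt ℝ h p) (v : E) :
    fderiv ℝ (fun q => g q - h q) p v = fderiv ℝ g p v - fderiv ℝ h p v := by
  rw [fderiv_fun_sub hg hh]; rfl

lemma dd_mul {g h : E → ℝ} {p : E} (hg : DifferentiableAt ℝ g p)
    (hh : DifferentiableAt ℝ h p) (v : E) :
    fderiv ℝ (fun q => g q * h q) p v = fderiv ℝ g p v * h p + g p * fderiv ℝ h p v := by
  rw [fderiv_fun_mul hg hh]
  simp only [ContinuousLinearMap.add_apply, ContinuousLinearMap.smul_apply, smul_eq_mul]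
  ring

lemma dd_const_mul {g : E → ℝ} {p : E} (hg : DifferentiableAt ℝ g p) (c : ℝ) (v : E) :
    fderiv ℝ (fun q => c * g q) p v = c * fderiv ℝ g p v := by
  rw [fderiv_const_mul hg]; rfl

lemma dd_sq {g : E → ℝ} {p : E} (hg : DifferentiableAt ℝ g p) (v : E) :
    fderiv ℝ (fun q => g q ^ 2) p v = 2 * g p * fderiv ℝ g p v := by
  have h : (fun q => g q ^ 2) = fun q => g q * g q := by ext q; ring
  rw [h, dd_mul hg hg]; ring

lemma dd_sum {ι : Type*} {s : Finset ι} {g : ι → E → ℝ} {p : E}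
    (hg : ∀ i ∈ s, DifferentiableAt ℝ (g i) p) (v : E) :
    fderiv ℝ (fun q => ∑ i ∈ s, g i q) p v = ∑ i ∈ s, fderiv ℝ (g i) p v := by
  rw [fderiv_fun_sum hg]; simp

lemma dd_dd {g : E → ℝ} (hg : ContDiff ℝ ∞ g) (p v w : E) :
    fderiv ℝ (fun q => fderiv ℝ g q w) p v = fderiv ℝ (fderiv ℝ g) p v w := by
  have h1 : DifferentiableAt ℝ (fderiv ℝ g) p :=
    ((hg.fderiv_right (m := ∞) le_rfl).differentiable (by decide)).differentiableAt
  rw [fderiv_clm_apply h1 (differentiableAt_const w)]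
  simp

lemma dd_comm {g : E → ℝ} (hg : ContDiff ℝ ∞ g) (p v w : E) :
    fderiv ℝ (fun q => fderiv ℝ g q w) p v = fderiv ℝ (fun q => fderiv ℝ g q v) p w := by
  rw [dd_dd hg, dd_dd hg]
  exact (hg.contDiffAt.isSymmSndFDerivAt (by simp; decide)).eq v w

lemma dd_comp_f {f : ℝ × ℝ → ℝ} (hf : ContDiff ℝ 1 f) {u : E × ℝ → ℝ} {p : E × ℝ}
    (hud : DifferentiableAt ℝ u p) (v : E × ℝ) (hv : v.2 = 0) :
    fderiv ℝ (fun q => f (q.2, u q)) p v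
      = deriv (fun s => f (p.2, s)) (u p) * fderiv ℝ u p v := by
  have hfd : DifferentiableAt ℝ f (p.2, u p) := (hf.differentiable one_ne_zero) _
  have hφ : HasFDerivAt (fun q : E × ℝ => (q.2, u q))
      ((ContinuousLinearMap.snd ℝ E ℝ).prod (fderiv ℝ u p)) p :=
    (hasFDerivAt_snd).prodMk hud.hasFDerivAt
  have hcomp : fderiv ℝ (fun q => f (q.2, u q)) p v
      = fderiv ℝ f (p.2, u p) (v.2, fderiv ℝ u p v) := by
    have h := (hfd.hasFDerivAt.comp p hφ).fderiv
    rw [show (fun q => f (q.2, u q)) = f ∘ (fun q : E × ℝ => (q.2, u q)) from rfl, h]; rfl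
  have h2 : HasDerivAt (fun s => f (p.2, s)) (fderiv ℝ f (p.2, u p) ((0:ℝ), (1:ℝ))) (u p) := by
    have hg : HasDerivAt (fun s : ℝ => ((p.2 : ℝ), s)) ((0 : ℝ), (1 : ℝ)) (u p) :=
      (hasDerivAt_const _ _).prodMk (hasDerivAt_id _)
    exact hfd.hasFDerivAt.comp_hasDerivAt _ hg
  rw [hcomp, hv, h2.deriv]
  have h3 : ((0 : ℝ), fderiv ℝ u p v) = (fderiv ℝ u p v) • ((0:ℝ), (1:ℝ)) := by simp
  rw [h3, (fderiv ℝ f (p.2, u p)).map_smul]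
  simp [mul_comm]

end DDHelpers

/-- Partial derivative in the `i`-th spatial coordinate direction for a function on
`EuclideanSpace ℝ (Fin N) × ℝ` (space × time). -/
noncomputable def spd {N : ℕ} (i : Fin N) (v : EuclideanSpace ℝ (Fin N) × ℝ → ℝ)
    (p : EuclideanSpace ℝ (Fin N) × ℝ) : ℝ :=
  fderiv ℝ v p (EuclideanSpace.single i 1, 0)

/-- Partial derivative in time for a function on `EuclideanSpace ℝ (Fin N) × ℝ`. -/
noncomputable def tpd {N : ℕ} (v : EuclideanSpace ℝ (Fin N) × ℝ → ℝ)
    (p : EuclideanSpace ℝ (Fin N) × ℝ) : ℝ :=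
  fderiv ℝ v p (0, 1)

/-- Spatial Laplacian `Δv = ∑ⱼ ∂ⱼ∂ⱼ v` for a function on `EuclideanSpace ℝ (Fin N) × ℝ`. -/
noncomputable def lap {N : ℕ} (v : EuclideanSpace ℝ (Fin N) × ℝ → ℝ)
    (p : EuclideanSpace ℝ (Fin N) × ℝ) : ℝ :=
  ∑ j : Fin N, spd j (spd j v) p

lemma spd_fold {N : ℕ} (i : Fin N) (g : EuclideanSpace ℝ (Fin N) × ℝ → ℝ)
    (q : EuclideanSpace ℝ (Fin N) × ℝ) :
    fderiv ℝ g q (EuclideanSpace.single i 1, 0) = spd i g q := rfl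

lemma tpd_fold {N : ℕ} (g : EuclideanSpace ℝ (Fin N) × ℝ → ℝ)
    (q : EuclideanSpace ℝ (Fin N) × ℝ) :
    fderiv ℝ g q (0, 1) = tpd g q := rfl

/-- The evolution identity (10) for `w = ½|∇u|²` along classical solutions of
`u_t = uΔu − γ|∇u|² + f(t,u)` on an open set. -/
theorem evolution_identity_half_gradient_sq (N : ℕ) (hN : 1 ≤ N) (γ : ℝ)
    (f : ℝ × ℝ → ℝ) (hf : ContDiff ℝ 1 f)
    (u : EuclideanSpace ℝ (Fin N) × ℝ → ℝ) (hu : ContDiff ℝ (⊤ : ℕ∞) u)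
    (Ω : Set (EuclideanSpace ℝ (Fin N) × ℝ)) (hΩ : IsOpen Ω)
    (hpde : ∀ p ∈ Ω,
      tpd u p = u p * lap u p - γ * (∑ i : Fin N, (spd i u p) ^ 2) + f (p.2, u p)) :
    ∀ p ∈ Ω,
      tpd (fun q => (1 / 2) * ∑ i : Fin N, (spd i u q) ^ 2) p
        = 2 * ((1 / 2) * ∑ i : Fin N, (spd i u p) ^ 2) * lap u p
          + u p * lap (fun q => (1 / 2) * ∑ i : Fin N, (spd i u q) ^ 2) p
          - u p * ∑ i : Fin N, ∑ j : Fin N, (spd i (spd j u) p) ^ 2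
          - 2 * γ * ∑ i : Fin N,
              spd i u p * spd i (fun q => (1 / 2) * ∑ k : Fin N, (spd k u q) ^ 2) p
          + 2 * deriv (fun s => f (p.2, s)) (u p)
              * ((1 / 2) * ∑ i : Fin N, (spd i u p) ^ 2) := by
  intro p hp
  have hu' : ContDiff ℝ ∞ u := hu.of_le (by simp)
  -- smoothness of iterated spatial derivatives
  have hs1 : ∀ i : Fin N, ContDiff ℝ ∞ (spd i u) := fun i => dd_smooth hu' _
  have hs2 : ∀ i j : Fin N, ContDiff ℝ ∞ (spd i (spd j u)) := fun i j => dd_smooth (hs1 j) _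
  have hs3 : ∀ i j k : Fin N, ContDiff ℝ ∞ (spd i (spd j (spd k u))) :=
    fun i j k => dd_smooth (hs2 j k) _
  have hsq : ContDiff ℝ ∞ (fun q => ∑ k : Fin N, (spd k u q) ^ 2) :=
    ContDiff.sum fun k _ => (hs1 k).pow 2
  have hlap : ContDiff ℝ ∞ (lap u) := ContDiff.sum fun j _ => hs2 j j
  -- differentiability at every point
  have du : ∀ q, DifferentiableAt ℝ u q := fun q => (hu'.differentiable (by decide)) q
  have ds1 : ∀ (i : Fin N) q, DifferentiableAt ℝ (spd i u) q :=
    fun i q => ((hs1 i).differentiable (by decide)) q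
  have ds2 : ∀ (i j : Fin N) q, DifferentiableAt ℝ (spd i (spd j u)) q :=
    fun i j q => ((hs2 i j).differentiable (by decide)) q
  have dlap : ∀ q, DifferentiableAt ℝ (lap u) q := fun q => (hlap.differentiable (by decide)) q
  have dsq : ∀ q, DifferentiableAt ℝ (fun q' => ∑ k : Fin N, (spd k u q') ^ 2) q :=
    fun q => (hsq.differentiable (by decide)) q
  have dsqk : ∀ (k : Fin N) q, DifferentiableAt ℝ (fun q' => (spd k u q') ^ 2) q :=
    fun k q => (((hs1 k).pow 2).differentiable (by decide)) q
  have dmul : ∀ q, DifferentiableAt ℝ (fun q' => u q' * lap u q') q :=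
    fun q => (du q).mul (dlap q)
  have dγs : ∀ q, DifferentiableAt ℝ (fun q' => γ * ∑ k : Fin N, (spd k u q') ^ 2) q :=
    fun q => (dsq q).const_mul γ
  have dfu : ∀ q, DifferentiableAt ℝ (fun q' => f (q'.2, u q')) q := fun q =>
    DifferentiableAt.comp q ((hf.differentiable one_ne_zero) (q.2, u q))
      ((differentiableAt_snd).prodMk (du q))
  -- derivative of w in any direction
  have hw_dd : ∀ (v : EuclideanSpace ℝ (Fin N) × ℝ) q,
      fderiv ℝ (fun q' => (1 / 2) * ∑ i : Fin N, (spd i u q') ^ 2) q v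
        = ∑ i : Fin N, spd i u q * fderiv ℝ (spd i u) q v := by
    intro v q
    rw [dd_const_mul (dsq q), dd_sum (fun i _ => dsqk i q), Finset.mul_sum]
    exact Finset.sum_congr rfl fun i _ => by rw [dd_sq (ds1 i q)]; ring
  -- symmetry of second derivatives
  have hswap : ∀ i j : Fin N, spd i (spd j u) = spd j (spd i u) :=
    fun i j => funext fun q => dd_comm hu' q _ _
  have htswap : ∀ (i : Fin N), tpd (spd i u) p = spd i (tpd u) p :=
    fun i => dd_comm hu' p _ _
  -- derivative of lap u in any direction
  have hlapd : ∀ q v, fderiv ℝ (lap u) q v = ∑ j : Fin N, fderiv ℝ (spd j (spd j u)) q v :=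
    fun q v => dd_sum (fun j _ => ds2 j j q) v
  -- PDE locally as eventual equality
  have hev : tpd u =ᶠ[nhds p]
      fun q => u q * lap u q - γ * ∑ k : Fin N, (spd k u q) ^ 2 + f (q.2, u q) := by
    filter_upwards [hΩ.mem_nhds hp] with q hq
    exact hpde q hq
  have hTF : ∀ i : Fin N, spd i (tpd u) p
      = spd i (fun q => u q * lap u q - γ * ∑ k : Fin N, (spd k u q) ^ 2 + f (q.2, u q)) p := by
    intro i
    show fderiv ℝ (tpd u) p _ = fderiv ℝ _ p _
    rw [hev.fderiv_eq]
  -- compute the spatial derivative of the PDE right-hand side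
  have hFi : ∀ i : Fin N,
      spd i (fun q => u q * lap u q - γ * ∑ k : Fin N, (spd k u q) ^ 2 + f (q.2, u q)) p
        = spd i u p * lap u p + u p * (∑ j : Fin N, spd j (spd j (spd i u)) p)
          - γ * (2 * ∑ k : Fin N, spd k u p * spd i (spd k u) p)
          + deriv (fun s => f (p.2, s)) (u p) * spd i u p := by
    intro i
    have hsq2 : ∀ k : Fin N, fderiv ℝ (fun q' => (spd k u q') ^ 2) p
        (EuclideanSpace.single i 1, 0) = 2 * (spd k u p * spd i (spd k u) p) := by
      intro k
      rw [dd_sq (ds1 k p)]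
      simp only [spd_fold]; ring
    have hswap3 : ∀ j : Fin N, spd i (spd j (spd j u)) p = spd j (spd j (spd i u)) p := by
      intro j
      calc spd i (spd j (spd j u)) p = spd j (spd i (spd j u)) p := dd_comm (hs1 j) p _ _
        _ = spd j (spd j (spd i u)) p := by rw [hswap i j]
    show fderiv ℝ _ p (EuclideanSpace.single i 1, 0) = _
    rw [dd_add ((dmul p).fun_sub (dγs p)) (dfu p), dd_sub (dmul p) (dγs p),
      dd_mul (du p) (dlap p), dd_const_mul (dsq p) γ, dd_sum (fun k _ => dsqk k p),
      dd_comp_f hf (du p) _ rfl, hlapd p]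
    simp only [spd_fold, hsq2, hswap3]
    rw [← Finset.mul_sum]
  -- spatial derivative of w
  have hWi : ∀ i : Fin N,
      spd i (fun q => (1 / 2) * ∑ k : Fin N, (spd k u q) ^ 2) p
        = ∑ k : Fin N, spd k u p * spd i (spd k u) p := by
    intro i
    show fderiv ℝ _ p (EuclideanSpace.single i 1, 0) = _
    rw [hw_dd]
    simp only [spd_fold]
  -- Laplacian of w
  have hlapW : lap (fun q => (1 / 2) * ∑ i : Fin N, (spd i u q) ^ 2) p
      = (∑ j : Fin N, ∑ k : Fin N, (spd j (spd k u) p) ^ 2)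
        + ∑ k : Fin N, spd k u p * ∑ j : Fin N, spd j (spd j (spd k u)) p := by
    have h1 : ∀ j : Fin N, spd j (spd j (fun q => (1 / 2) * ∑ i : Fin N, (spd i u q) ^ 2)) p
        = ∑ k : Fin N, ((spd j (spd k u) p) ^ 2 + spd k u p * spd j (spd j (spd k u)) p) := by
      intro j
      have hfun : spd j (fun q => (1 / 2) * ∑ i : Fin N, (spd i u q) ^ 2)
          = fun q => ∑ k : Fin N, spd k u q * spd j (spd k u) q := by
        funext q
        show fderiv ℝ _ q (EuclideanSpace.single j 1, 0) = _
        rw [hw_dd]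
        simp only [spd_fold]
      show fderiv ℝ _ p (EuclideanSpace.single j 1, 0) = _
      rw [hfun, dd_sum (fun k _ => (ds1 k p).fun_mul (ds2 j k p))]
      refine Finset.sum_congr rfl fun k _ => ?_
      rw [dd_mul (ds1 k p) (ds2 j k p)]
      simp only [spd_fold]; ring
    show ∑ j : Fin N, spd j (spd j (fun q => (1 / 2) * ∑ i : Fin N, (spd i u q) ^ 2)) p = _
    rw [Finset.sum_congr rfl fun j _ => h1 j]
    calc ∑ j : Fin N, ∑ k : Fin N,
            ((spd j (spd k u) p) ^ 2 + spd k u p * spd j (spd j (spd k u)) p)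
        = (∑ j : Fin N, ∑ k : Fin N, (spd j (spd k u) p) ^ 2)
            + ∑ j : Fin N, ∑ k : Fin N, spd k u p * spd j (spd j (spd k u)) p := by
          rw [← Finset.sum_add_distrib]
          exact Finset.sum_congr rfl fun j _ => Finset.sum_add_distrib
      _ = _ := by
          congr 1
          rw [Finset.sum_comm]
          exact Finset.sum_congr rfl fun k _ => (Finset.mul_sum _ _ _).symm
  -- main computation
  calc tpd (fun q => (1 / 2) * ∑ i : Fin N, (spd i u q) ^ 2) p
      = ∑ i : Fin N, spd i u p * tpd (spd i u) p := by
        show fderiv ℝ _ p ((0 : EuclideanSpace ℝ (Fin N)), (1 : ℝ)) = _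
        rw [hw_dd]
        simp only [tpd_fold]
    _ = ∑ i : Fin N, spd i u p *
          (spd i u p * lap u p + u p * (∑ j : Fin N, spd j (spd j (spd i u)) p)
            - γ * (2 * ∑ k : Fin N, spd k u p * spd i (spd k u) p)
            + deriv (fun s => f (p.2, s)) (u p) * spd i u p) :=
        Finset.sum_congr rfl fun i _ => by rw [htswap i, hTF i, hFi i]
    _ = ∑ i : Fin N,
          ((spd i u p) ^ 2 * lap u p
            + u p * (spd i u p * ∑ j : Fin N, spd j (spd j (spd i u)) p)
            - 2 * γ * (spd i u p * ∑ k : Fin N, spd k u p * spd i (spd k u) p)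
            + deriv (fun s => f (p.2, s)) (u p) * (spd i u p) ^ 2) :=
        Finset.sum_congr rfl fun i _ => by ring
    _ = (∑ i : Fin N, (spd i u p) ^ 2) * lap u p
          + u p * ∑ i : Fin N, spd i u p * ∑ j : Fin N, spd j (spd j (spd i u)) p
          - 2 * γ * ∑ i : Fin N, spd i u p * ∑ k : Fin N, spd k u p * spd i (spd k u) p
          + deriv (fun s => f (p.2, s)) (u p) * ∑ i : Fin N, (spd i u p) ^ 2 := by
        rw [Finset.sum_add_distrib, Finset.sum_sub_distrib, Finset.sum_add_distrib,
          ← Finset.sum_mul, ← Finset.mul_sum, ← Finset.mul_sum, ← Finset.mul_sum]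
    _ = _ := by
        rw [hlapW]
        simp only [hWi]
        ring
end

section
/- Let N ≥ 1, let γ, α ∈ ℝ, let f : ℝ × ℝ → ℝ be continuously differentiable, and let u : EuclideanSpace ℝ (Fin N) × ℝ → ℝ be smooth, everywhere positive, and satisfy u_t = u·Δu − γ·|∇u|² + f(t,u) on an open set (∇, Δ in the spatial variable). Set w = ½∑_{i=1}^N (∂_{x_i} u)² and z = u^α·w. Then on that set z satisfies the exact identity z_t = u·Δz − 2(α+γ)·∑_{i=1}^N (∂_{x_i}u)·(∂_{x_i}z) + (2(∂_u f)(t,u) + α·u^(−1)·f(t,u))·z + 2α(α+1+γ)·u^(−α−1)·z² + 2z·Δu − u^(α+1)·∑_{i=1}^N∑_{j=1}^N (∂_{x_i}∂_{x_j}u)². -/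
namespace EvAux

variable {N : ℕ}

abbrev E (N : ℕ) := EuclideanSpace ℝ (Fin N) × ℝ

lemma contDiff_dir {v : E N → ℝ} (hv : ContDiff ℝ (⊤ : ℕ∞) v) (w : E N) :
    ContDiff ℝ (⊤ : ℕ∞) (fun q => fderiv ℝ v q w) :=
  (hv.fderiv_right (by simp)).clm_apply contDiff_const

lemma contDiff_spd {v : E N → ℝ} (hv : ContDiff ℝ (⊤ : ℕ∞) v) (i : Fin N) :
    ContDiff ℝ (⊤ : ℕ∞) (spd i v) :=
  contDiff_dir hv _

lemma pd_mul {a b : E N → ℝ} {q : E N} (ha : DifferentiableAt ℝ a q)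
    (hb : DifferentiableAt ℝ b q) (w : E N) :
    fderiv ℝ (fun x => a x * b x) q w = fderiv ℝ a q w * b q + a q * fderiv ℝ b q w := by
  rw [fderiv_fun_mul ha hb]; simp; ring

lemma pd_add {a b : E N → ℝ} {q : E N} (ha : DifferentiableAt ℝ a q)
    (hb : DifferentiableAt ℝ b q) (w : E N) :
    fderiv ℝ (fun x => a x + b x) q w = fderiv ℝ a q w + fderiv ℝ b q w := by
  rw [fderiv_fun_add ha hb]; simp

lemma pd_sub {a b : E N → ℝ} {q : E N} (ha : DifferentiableAt ℝ a q)
    (hb : DifferentiableAt ℝ b q) (w : E N) :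
    fderiv ℝ (fun x => a x - b x) q w = fderiv ℝ a q w - fderiv ℝ b q w := by
  rw [fderiv_fun_sub ha hb]; simp

lemma pd_sum {ι : Type*} {s : Finset ι} {A : ι → E N → ℝ} {q : E N}
    (h : ∀ i ∈ s, DifferentiableAt ℝ (A i) q) (w : E N) :
    fderiv ℝ (fun x => ∑ i ∈ s, A i x) q w = ∑ i ∈ s, fderiv ℝ (A i) q w := by
  rw [fderiv_fun_sum h]; simp

lemma pd_const_mul {a : E N → ℝ} {q : E N} (ha : DifferentiableAt ℝ a q) (c : ℝ) (w : E N) :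
    fderiv ℝ (fun x => c * a x) q w = c * fderiv ℝ a q w := by
  rw [fderiv_const_mul ha]; simp

lemma pd_rpow {u : E N → ℝ} {q : E N} (hu : DifferentiableAt ℝ u q) (h : u q ≠ 0)
    (α : ℝ) (w : E N) :
    fderiv ℝ (fun x => u x ^ α) q w = α * u q ^ (α - 1) * fderiv ℝ u q w := by
  have h1 := (Real.hasDerivAt_rpow_const (p := α) (Or.inl h)).comp_hasFDerivAt q hu.hasFDerivAt
  have h2 : HasFDerivAt (fun x => u x ^ α)
      ((α * u q ^ (α - 1)) • fderiv ℝ u q) q := h1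
  rw [h2.fderiv]; simp

lemma pd_pow2 {a : E N → ℝ} {q : E N} (ha : DifferentiableAt ℝ a q) (w : E N) :
    fderiv ℝ (fun x => (a x) ^ 2) q w = 2 * a q * fderiv ℝ a q w := by
  have h : (fun x => (a x) ^ 2) = fun x => a x * a x := by funext x; ring
  rw [h, pd_mul ha ha]; ring

lemma pd_comm {v : E N → ℝ} (hv : ContDiff ℝ (⊤ : ℕ∞) v) (q : E N) (w₁ w₂ : E N) :
    fderiv ℝ (fun x => fderiv ℝ v x w₁) q w₂ = fderiv ℝ (fun x => fderiv ℝ v x w₂) q w₁ := by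
  have hd : DifferentiableAt ℝ (fderiv ℝ v) q :=
    ((hv.fderiv_right (m := 1) (WithTop.coe_le_coe.mpr le_top)).differentiable one_ne_zero) q
  have key : ∀ w a : E N,
      fderiv ℝ (fun x => fderiv ℝ v x w) q a = fderiv ℝ (fderiv ℝ v) q a w := by
    intro w a
    rw [fderiv_clm_apply hd (differentiableAt_const w)]
    simp
  rw [key, key]
  exact (hv.contDiffAt.isSymmSndFDerivAt (by rw [minSmoothness_of_isRCLikeNormedField]; exact WithTop.coe_le_coe.mpr le_top)) w₂ w₁


lemma spd_spd_comm {v : E N → ℝ} (hv : ContDiff ℝ (⊤ : ℕ∞) v) (a b : Fin N) (p : E N) :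
    spd a (spd b v) p = spd b (spd a v) p :=
  pd_comm hv p _ _

lemma tpd_spd_comm {v : E N → ℝ} (hv : ContDiff ℝ (⊤ : ℕ∞) v) (k : Fin N) (p : E N) :
    tpd (spd k v) p = spd k (tpd v) p :=
  pd_comm hv p _ _

lemma third_comm {u : E N → ℝ} (hu : ContDiff ℝ (⊤ : ℕ∞) u) (j k : Fin N) (p : E N) :
    spd j (spd j (spd k u)) p = spd k (spd j (spd j u)) p := by
  have h1 : spd j (spd k u) = spd k (spd j u) := funext fun q => spd_spd_comm hu j k q
  rw [h1]
  exact spd_spd_comm (contDiff_spd hu j) j k p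

lemma pd_f {f : ℝ × ℝ → ℝ} (hf : ContDiff ℝ 1 f) {u : E N → ℝ} {q : E N}
    (hu : DifferentiableAt ℝ u q) (k : Fin N) :
    fderiv ℝ (fun x => f (x.2, u x)) q (EuclideanSpace.single k 1, 0)
      = deriv (fun s => f (q.2, s)) (u q) * spd k u q := by
  have hg : HasFDerivAt (fun x : E N => (x.2, u x))
      ((ContinuousLinearMap.snd ℝ (EuclideanSpace ℝ (Fin N)) ℝ).prod (fderiv ℝ u q)) q :=
    HasFDerivAt.prodMk (ContinuousLinearMap.snd ℝ (EuclideanSpace ℝ (Fin N)) ℝ).hasFDerivAt hu.hasFDerivAt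
  have hF : HasFDerivAt f (fderiv ℝ f (q.2, u q)) (q.2, u q) :=
    (hf.differentiable one_ne_zero (q.2, u q)).hasFDerivAt
  have hc : HasFDerivAt (fun x => f (x.2, u x))
      ((fderiv ℝ f (q.2, u q)).comp
        ((ContinuousLinearMap.snd ℝ (EuclideanSpace ℝ (Fin N)) ℝ).prod (fderiv ℝ u q))) q :=
    hF.comp q hg
  rw [hc.fderiv]
  have hder : fderiv ℝ f (q.2, u q) (0, 1) = deriv (fun s => f (q.2, s)) (u q) := by
    have hcur : HasDerivAt (fun y : ℝ => ((q.2 : ℝ), y)) ((0 : ℝ), (1 : ℝ)) (u q) :=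
      (hasDerivAt_const (u q) q.2).prodMk (hasDerivAt_id (u q))
    have h2 := hF.comp_hasDerivAt (u q) hcur
    exact h2.deriv.symm
  have heval : ((ContinuousLinearMap.snd ℝ (EuclideanSpace ℝ (Fin N)) ℝ).prod
      (fderiv ℝ u q)) (EuclideanSpace.single k 1, 0) = (0, spd k u q) := rfl
  rw [ContinuousLinearMap.comp_apply, heval]
  have : ((0 : ℝ), spd k u q) = spd k u q • ((0 : ℝ), (1 : ℝ)) := by simp
  rw [this, (fderiv ℝ f (q.2, u q)).map_smul, hder]
  simp [mul_comm]

variable {u : E N → ℝ}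

lemma pd_z (hu : ContDiff ℝ (⊤ : ℕ∞) u) (hpos : ∀ p, 0 < u p) (α : ℝ) (q : E N) (w : E N) :
    fderiv ℝ (fun x => u x ^ α * ((1 / 2) * ∑ i : Fin N, (spd i u x) ^ 2)) q w
      = α * u q ^ (α - 1) * fderiv ℝ u q w * ((1 / 2) * ∑ i : Fin N, (spd i u q) ^ 2)
        + u q ^ α * ∑ k : Fin N, spd k u q * fderiv ℝ (spd k u) q w := by
  have du : Differentiable ℝ u := hu.differentiable (by simp)
  have dspd : ∀ i : Fin N, Differentiable ℝ (spd i u) :=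
    fun i => (contDiff_spd hu i).differentiable (by simp)
  have dS : DifferentiableAt ℝ (fun x => ∑ i : Fin N, (spd i u x) ^ 2) q :=
    DifferentiableAt.fun_sum fun i _ => ((dspd i) q).fun_pow 2
  have dW : DifferentiableAt ℝ (fun x => (1 / 2 : ℝ) * ∑ i : Fin N, (spd i u x) ^ 2) q :=
    dS.const_mul _
  have dA : DifferentiableAt ℝ (fun x => u x ^ α) q :=
    (du q).rpow_const (Or.inl (hpos q).ne')
  rw [pd_mul dA dW, pd_rpow (du q) (hpos q).ne' α, pd_const_mul dS,
    pd_sum (fun i _ => ((dspd i) q).fun_pow 2)]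
  have hsq : ∀ i ∈ Finset.univ, fderiv ℝ (fun x => (spd i u x) ^ 2) q w
      = 2 * spd i u q * fderiv ℝ (spd i u) q w := fun i _ => pd_pow2 ((dspd i) q) w
  rw [Finset.sum_congr rfl hsq]
  have h2 : (1 / 2 : ℝ) * ∑ i : Fin N, 2 * spd i u q * fderiv ℝ (spd i u) q w
      = ∑ i : Fin N, spd i u q * fderiv ℝ (spd i u) q w := by
    rw [Finset.mul_sum]; exact Finset.sum_congr rfl fun i _ => by ring
  rw [h2]

lemma spd_z (hu : ContDiff ℝ (⊤ : ℕ∞) u) (hpos : ∀ p, 0 < u p) (α : ℝ) (j : Fin N) :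
    spd j (fun x => u x ^ α * ((1 / 2) * ∑ i : Fin N, (spd i u x) ^ 2))
      = fun q => α * u q ^ (α - 1) * spd j u q * ((1 / 2) * ∑ i : Fin N, (spd i u q) ^ 2)
          + u q ^ α * ∑ k : Fin N, spd k u q * spd j (spd k u) q := by
  funext q
  exact pd_z hu hpos α q _

lemma tpd_z (hu : ContDiff ℝ (⊤ : ℕ∞) u) (hpos : ∀ p, 0 < u p) (α : ℝ) (p : E N) :
    tpd (fun x => u x ^ α * ((1 / 2) * ∑ i : Fin N, (spd i u x) ^ 2)) p
      = α * u p ^ (α - 1) * tpd u p * ((1 / 2) * ∑ i : Fin N, (spd i u p) ^ 2)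
        + u p ^ α * ∑ k : Fin N, spd k u p * tpd (spd k u) p :=
  pd_z hu hpos α p _

lemma pd_S (hu : ContDiff ℝ (⊤ : ℕ∞) u) (q : E N) (w : E N) :
    fderiv ℝ (fun x => ∑ i : Fin N, (spd i u x) ^ 2) q w
      = ∑ i : Fin N, 2 * spd i u q * fderiv ℝ (spd i u) q w := by
  rw [pd_sum (fun i _ => (((contDiff_spd hu i).differentiable (by simp)) q).fun_pow 2)]
  exact Finset.sum_congr rfl fun i _ =>
    pd_pow2 (((contDiff_spd hu i).differentiable (by simp)) q) w

lemma pd_W (hu : ContDiff ℝ (⊤ : ℕ∞) u) (q : E N) (w : E N) :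
    fderiv ℝ (fun x => (1 / 2 : ℝ) * ∑ i : Fin N, (spd i u x) ^ 2) q w
      = ∑ k : Fin N, spd k u q * fderiv ℝ (spd k u) q w := by
  have dS : DifferentiableAt ℝ (fun x => ∑ i : Fin N, (spd i u x) ^ 2) q :=
    DifferentiableAt.fun_sum fun i _ => (((contDiff_spd hu i).differentiable (by simp)) q).fun_pow 2
  rw [pd_const_mul dS, pd_S hu, Finset.mul_sum]
  exact Finset.sum_congr rfl fun i _ => by ring

lemma spd_spd_z (hu : ContDiff ℝ (⊤ : ℕ∞) u) (hpos : ∀ p, 0 < u p) (α : ℝ) (j : Fin N) (p : E N) :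
    spd j (spd j (fun x => u x ^ α * ((1 / 2) * ∑ i : Fin N, (spd i u x) ^ 2))) p
      = α * ((α - 1) * u p ^ (α - 1 - 1) * spd j u p) * spd j u p
            * ((1 / 2) * ∑ i : Fin N, (spd i u p) ^ 2)
        + α * u p ^ (α - 1) * spd j (spd j u) p * ((1 / 2) * ∑ i : Fin N, (spd i u p) ^ 2)
        + α * u p ^ (α - 1) * spd j u p * (∑ k : Fin N, spd k u p * spd j (spd k u) p)
        + (α * u p ^ (α - 1) * spd j u p * (∑ k : Fin N, spd k u p * spd j (spd k u) p)
          + u p ^ α * ∑ k : Fin N,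
              (spd j (spd k u) p * spd j (spd k u) p
                + spd k u p * spd j (spd j (spd k u)) p)) := by
  have du : Differentiable ℝ u := hu.differentiable (by simp)
  have hne : ∀ q, u q ≠ 0 := fun q => (hpos q).ne'
  have dsp : ∀ i : Fin N, Differentiable ℝ (spd i u) :=
    fun i => (contDiff_spd hu i).differentiable (by simp)
  have dsp2 : ∀ k : Fin N, Differentiable ℝ (spd j (spd k u)) :=
    fun k => (contDiff_spd (contDiff_spd hu k) j).differentiable (by simp)
  have dS : DifferentiableAt ℝ (fun x => ∑ i : Fin N, (spd i u x) ^ 2) p :=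
    DifferentiableAt.fun_sum fun i _ => ((dsp i) p).fun_pow 2
  have dW : DifferentiableAt ℝ (fun x => (1 / 2 : ℝ) * ∑ i : Fin N, (spd i u x) ^ 2) p :=
    dS.const_mul _
  have dp1 : DifferentiableAt ℝ (fun x => u x ^ (α - 1)) p :=
    (du p).rpow_const (Or.inl (hne p))
  have dpα : DifferentiableAt ℝ (fun x => u x ^ α) p :=
    (du p).rpow_const (Or.inl (hne p))
  have d11 : DifferentiableAt ℝ (fun x => α * u x ^ (α - 1)) p := dp1.const_mul α
  have d1 : DifferentiableAt ℝ (fun x => α * u x ^ (α - 1) * spd j u x) p :=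
    d11.mul ((dsp j) p)
  have dT1 : DifferentiableAt ℝ
      (fun x => α * u x ^ (α - 1) * spd j u x * ((1 / 2) * ∑ i : Fin N, (spd i u x) ^ 2)) p :=
    d1.mul dW
  have dsum2 : DifferentiableAt ℝ
      (fun x => ∑ k : Fin N, spd k u x * spd j (spd k u) x) p :=
    DifferentiableAt.fun_sum fun k _ => ((dsp k) p).mul ((dsp2 k) p)
  have dT2 : DifferentiableAt ℝ
      (fun x => u x ^ α * ∑ k : Fin N, spd k u x * spd j (spd k u) x) p := dpα.mul dsum2
  rw [spd_z hu hpos α j]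
  show fderiv ℝ (fun q => α * u q ^ (α - 1) * spd j u q
        * ((1 / 2) * ∑ i : Fin N, (spd i u q) ^ 2)
      + u q ^ α * ∑ k : Fin N, spd k u q * spd j (spd k u) q) p
      (EuclideanSpace.single j 1, 0) = _
  rw [pd_add dT1 dT2, pd_mul d1 dW, pd_mul d11 ((dsp j) p), pd_const_mul dp1 α,
    pd_rpow (du p) (hne p) (α - 1), pd_W hu, pd_mul dpα dsum2, pd_rpow (du p) (hne p) α,
    pd_sum (fun k _ => (((dsp k) p).fun_mul ((dsp2 k) p) : DifferentiableAt ℝ _ p)),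
    Finset.sum_congr rfl (fun k _ => pd_mul ((dsp k) p) ((dsp2 k) p)
      (EuclideanSpace.single j 1, 0))]
  have e1 : ∀ (v : E N → ℝ) (q : E N),
      fderiv ℝ v q (EuclideanSpace.single j 1, (0 : ℝ)) = spd j v q := fun v q => rfl
  simp only [e1]
  ring

lemma pd_lap (hu : ContDiff ℝ (⊤ : ℕ∞) u) (q : E N) (w : E N) :
    fderiv ℝ (fun x => lap u x) q w = ∑ j : Fin N, fderiv ℝ (spd j (spd j u)) q w := by
  have h : (fun x => lap u x) = fun x => ∑ j : Fin N, spd j (spd j u) x := rfl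
  rw [h, pd_sum (fun j _ =>
    ((contDiff_spd (contDiff_spd hu j) j).differentiable (by simp) q : DifferentiableAt ℝ _ q))]

lemma contDiff_lap (hu : ContDiff ℝ (⊤ : ℕ∞) u) : ContDiff ℝ (⊤ : ℕ∞) (fun x => lap u x) :=
  ContDiff.sum fun j _ => contDiff_spd (contDiff_spd hu j) j

lemma pd_rhs {f : ℝ × ℝ → ℝ} (hu : ContDiff ℝ (⊤ : ℕ∞) u) (hf : ContDiff ℝ 1 f) (γ : ℝ) (q : E N)
    (k : Fin N) :
    fderiv ℝ (fun x => u x * lap u x - γ * (∑ i : Fin N, (spd i u x) ^ 2) + f (x.2, u x)) q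
        (EuclideanSpace.single k 1, 0)
      = spd k u q * lap u q + u q * (∑ j : Fin N, spd k (spd j (spd j u)) q)
        - γ * (∑ i : Fin N, 2 * spd i u q * spd k (spd i u) q)
        + deriv (fun s => f (q.2, s)) (u q) * spd k u q := by
  have du : Differentiable ℝ u := hu.differentiable (by simp)
  have dlap : DifferentiableAt ℝ (fun x => lap u x) q :=
    (contDiff_lap hu).differentiable (by simp) q
  have dmul : DifferentiableAt ℝ (fun x => u x * lap u x) q := (du q).mul dlap
  have dS : DifferentiableAt ℝ (fun x => ∑ i : Fin N, (spd i u x) ^ 2) q :=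
    DifferentiableAt.fun_sum fun i _ => (((contDiff_spd hu i).differentiable (by simp)) q).fun_pow 2
  have dγS : DifferentiableAt ℝ (fun x => γ * ∑ i : Fin N, (spd i u x) ^ 2) q :=
    dS.const_mul γ
  have dsub : DifferentiableAt ℝ
      (fun x => u x * lap u x - γ * ∑ i : Fin N, (spd i u x) ^ 2) q := dmul.sub dγS
  have dfc : DifferentiableAt ℝ (fun x => f (x.2, u x)) q :=
    (hf.differentiable one_ne_zero (q.2, u q)).comp q (differentiableAt_snd.prodMk (du q))
  rw [pd_add dsub dfc, pd_sub dmul dγS, pd_mul (du q) dlap, pd_lap hu,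
    pd_const_mul dS γ, pd_S hu, pd_f hf (du q) k]
  have e1 : ∀ (v : E N → ℝ) (x : E N),
      fderiv ℝ v x (EuclideanSpace.single k 1, (0 : ℝ)) = spd k v x := fun v x => rfl
  simp only [e1]

lemma sum_lin2 {ι : Type*} (s : Finset ι) (c1 c2 : ℝ) (f1 f2 : ι → ℝ) :
    ∑ k ∈ s, (c1 * f1 k + c2 * f2 k) = c1 * ∑ k ∈ s, f1 k + c2 * ∑ k ∈ s, f2 k := by
  simp [Finset.sum_add_distrib, Finset.mul_sum]

lemma sum_lin4 {ι : Type*} (s : Finset ι) (c1 c2 c3 c4 : ℝ) (f1 f2 f3 f4 : ι → ℝ) :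
    ∑ k ∈ s, (c1 * f1 k + c2 * f2 k - c3 * f3 k + c4 * f4 k)
      = c1 * ∑ k ∈ s, f1 k + c2 * ∑ k ∈ s, f2 k - c3 * ∑ k ∈ s, f3 k + c4 * ∑ k ∈ s, f4 k := by
  simp [Finset.sum_add_distrib, Finset.sum_sub_distrib, Finset.mul_sum]

lemma sum_lin5 {ι : Type*} (s : Finset ι) (c1 c2 c3 c4 c5 : ℝ) (f1 f2 f3 f4 f5 : ι → ℝ) :
    ∑ k ∈ s, (c1 * f1 k + c2 * f2 k + c3 * f3 k + c4 * f4 k + c5 * f5 k)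
      = c1 * ∑ k ∈ s, f1 k + c2 * ∑ k ∈ s, f2 k + c3 * ∑ k ∈ s, f3 k
        + c4 * ∑ k ∈ s, f4 k + c5 * ∑ k ∈ s, f5 k := by
  simp [Finset.sum_add_distrib, Finset.mul_sum]

end EvAux

open EvAux in
/-- Identity (17) with `g(u) = u^α`: the exact evolution equation for
`z = u^α · ½|∇u|²` along positive classical solutions of `u_t = uΔu − γ|∇u|² + f(t,u)`. -/
theorem evolution_identity_z (N : ℕ) (hN : 1 ≤ N) (γ α : ℝ)
    (f : ℝ × ℝ → ℝ) (hf : ContDiff ℝ 1 f)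
    (u : EuclideanSpace ℝ (Fin N) × ℝ → ℝ) (hu : ContDiff ℝ (⊤ : ℕ∞) u)
    (hpos : ∀ p, 0 < u p)
    (Ω : Set (EuclideanSpace ℝ (Fin N) × ℝ)) (hΩ : IsOpen Ω)
    (hpde : ∀ p ∈ Ω,
      tpd u p = u p * lap u p - γ * (∑ i : Fin N, (spd i u p) ^ 2) + f (p.2, u p)) :
    ∀ p ∈ Ω,
      tpd (fun q => u q ^ α * ((1 / 2) * ∑ i : Fin N, (spd i u q) ^ 2)) p
        = u p * lap (fun q => u q ^ α * ((1 / 2) * ∑ i : Fin N, (spd i u q) ^ 2)) p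
          - 2 * (α + γ) * ∑ i : Fin N,
              spd i u p
                * spd i (fun q => u q ^ α * ((1 / 2) * ∑ k : Fin N, (spd k u q) ^ 2)) p
          + (2 * deriv (fun s => f (p.2, s)) (u p) + α * u p ^ (-1 : ℝ) * f (p.2, u p))
              * (u p ^ α * ((1 / 2) * ∑ i : Fin N, (spd i u p) ^ 2))
          + 2 * α * (α + 1 + γ) * u p ^ (-α - 1)
              * (u p ^ α * ((1 / 2) * ∑ i : Fin N, (spd i u p) ^ 2)) ^ 2
          + 2 * (u p ^ α * ((1 / 2) * ∑ i : Fin N, (spd i u p) ^ 2)) * lap u p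
          - u p ^ (α + 1) * ∑ i : Fin N, ∑ j : Fin N, (spd i (spd j u) p) ^ 2 := by
  intro p hp
  have du : Differentiable ℝ u := hu.differentiable (by simp)
  -- Step A: spatial derivative of the PDE
  have hpde' : ∀ k : Fin N, tpd (spd k u) p
      = spd k u p * lap u p + u p * (∑ j : Fin N, spd k (spd j (spd j u)) p)
        - γ * (∑ i : Fin N, 2 * spd i u p * spd k (spd i u) p)
        + deriv (fun s => f (p.2, s)) (u p) * spd k u p := by
    intro k
    have heq : fderiv ℝ (tpd u) p = fderiv ℝ
        (fun x => u x * lap u x - γ * (∑ i : Fin N, (spd i u x) ^ 2) + f (x.2, u x)) p :=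
      Filter.EventuallyEq.fderiv_eq
        (Filter.eventuallyEq_of_mem (hΩ.mem_nhds hp) (fun x hx => hpde x hx))
    calc tpd (spd k u) p = spd k (tpd u) p := tpd_spd_comm hu k p
      _ = fderiv ℝ
            (fun x => u x * lap u x - γ * (∑ i : Fin N, (spd i u x) ^ 2) + f (x.2, u x)) p
            (EuclideanSpace.single k 1, 0) := by
          show fderiv ℝ (tpd u) p _ = _
          rw [heq]
      _ = _ := pd_rhs hu hf γ p k
  -- Step B
  have hsum3 : ∑ k : Fin N, spd k u p * tpd (spd k u) p
      = lap u p * (∑ i : Fin N, (spd i u p) ^ 2)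
        + u p * (∑ k : Fin N, spd k u p * ∑ j : Fin N, spd k (spd j (spd j u)) p)
        - 2 * γ * (∑ j : Fin N, spd j u p * ∑ k : Fin N, spd k u p * spd j (spd k u) p)
        + deriv (fun s => f (p.2, s)) (u p) * (∑ i : Fin N, (spd i u p) ^ 2) := by
    calc ∑ k : Fin N, spd k u p * tpd (spd k u) p
        = ∑ k : Fin N, (lap u p * (spd k u p) ^ 2
            + u p * (spd k u p * ∑ j : Fin N, spd k (spd j (spd j u)) p)
            - 2 * γ * (spd k u p * ∑ i : Fin N, spd i u p * spd k (spd i u) p)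
            + deriv (fun s => f (p.2, s)) (u p) * (spd k u p) ^ 2) := by
          refine Finset.sum_congr rfl fun k _ => ?_
          rw [hpde' k]
          have h2 : (∑ i : Fin N, 2 * spd i u p * spd k (spd i u) p)
              = 2 * ∑ i : Fin N, spd i u p * spd k (spd i u) p := by
            rw [Finset.mul_sum]; exact Finset.sum_congr rfl fun i _ => by ring
          rw [h2]; ring
      _ = _ := by rw [sum_lin4]
  -- Step C: Laplacian of z
  have hLap : lap (fun q => u q ^ α * ((1 / 2) * ∑ i : Fin N, (spd i u q) ^ 2)) p
      = (α * (α - 1) * u p ^ (α - 1 - 1) * ((1 / 2) * ∑ i : Fin N, (spd i u p) ^ 2))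
            * (∑ i : Fin N, (spd i u p) ^ 2)
        + (α * u p ^ (α - 1) * ((1 / 2) * ∑ i : Fin N, (spd i u p) ^ 2))
            * (∑ j : Fin N, spd j (spd j u) p)
        + (2 * α * u p ^ (α - 1))
            * (∑ j : Fin N, spd j u p * ∑ k : Fin N, spd k u p * spd j (spd k u) p)
        + u p ^ α * (∑ i : Fin N, ∑ j : Fin N, (spd i (spd j u) p) ^ 2)
        + u p ^ α * (∑ k : Fin N, spd k u p * ∑ j : Fin N, spd k (spd j (spd j u)) p) := by
    have h0 : lap (fun q => u q ^ α * ((1 / 2) * ∑ i : Fin N, (spd i u q) ^ 2)) p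
        = ∑ j : Fin N,
            spd j (spd j (fun q => u q ^ α * ((1 / 2) * ∑ i : Fin N, (spd i u q) ^ 2))) p := rfl
    rw [h0]
    calc ∑ j : Fin N,
            spd j (spd j (fun q => u q ^ α * ((1 / 2) * ∑ i : Fin N, (spd i u q) ^ 2))) p
        = ∑ j : Fin N,
            ((α * (α - 1) * u p ^ (α - 1 - 1) * ((1 / 2) * ∑ i : Fin N, (spd i u p) ^ 2))
                * (spd j u p) ^ 2
              + (α * u p ^ (α - 1) * ((1 / 2) * ∑ i : Fin N, (spd i u p) ^ 2))
                  * spd j (spd j u) p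
              + (2 * α * u p ^ (α - 1))
                  * (spd j u p * ∑ k : Fin N, spd k u p * spd j (spd k u) p)
              + u p ^ α * (∑ k : Fin N, spd j (spd k u) p * spd j (spd k u) p)
              + u p ^ α * (∑ k : Fin N, spd k u p * spd k (spd j (spd j u)) p)) := by
          refine Finset.sum_congr rfl fun j _ => ?_
          rw [spd_spd_z hu hpos α j p]
          have hsplit : (∑ k : Fin N, (spd j (spd k u) p * spd j (spd k u) p
                + spd k u p * spd j (spd j (spd k u)) p))
              = (∑ k : Fin N, spd j (spd k u) p * spd j (spd k u) p)
                + ∑ k : Fin N, spd k u p * spd k (spd j (spd j u)) p := by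
            rw [Finset.sum_add_distrib]
            congr 1
            exact Finset.sum_congr rfl fun k _ => by rw [third_comm hu j k p]
          rw [hsplit]; ring
      _ = _ := by
          rw [sum_lin5]
          have hQ : (∑ j : Fin N, ∑ k : Fin N, spd j (spd k u) p * spd j (spd k u) p)
              = ∑ i : Fin N, ∑ j : Fin N, (spd i (spd j u) p) ^ 2 :=
            Finset.sum_congr rfl fun j _ => Finset.sum_congr rfl fun k _ => by ring
          have hswap : (∑ j : Fin N, ∑ k : Fin N, spd k u p * spd k (spd j (spd j u)) p)
              = ∑ k : Fin N, spd k u p * ∑ j : Fin N, spd k (spd j (spd j u)) p := by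
            rw [Finset.sum_comm]
            exact Finset.sum_congr rfl fun k _ => by rw [Finset.mul_sum]
          rw [hQ, hswap]
  -- Step D: gradient coupling term
  have hmid : (∑ i : Fin N, spd i u p
        * spd i (fun q => u q ^ α * ((1 / 2) * ∑ k : Fin N, (spd k u q) ^ 2)) p)
      = (α * u p ^ (α - 1) * ((1 / 2) * ∑ i : Fin N, (spd i u p) ^ 2))
          * (∑ i : Fin N, (spd i u p) ^ 2)
        + u p ^ α
          * (∑ j : Fin N, spd j u p * ∑ k : Fin N, spd k u p * spd j (spd k u) p) := by
    calc (∑ i : Fin N, spd i u p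
          * spd i (fun q => u q ^ α * ((1 / 2) * ∑ k : Fin N, (spd k u q) ^ 2)) p)
        = ∑ i : Fin N,
            ((α * u p ^ (α - 1) * ((1 / 2) * ∑ i : Fin N, (spd i u p) ^ 2)) * (spd i u p) ^ 2
              + u p ^ α * (spd i u p * ∑ k : Fin N, spd k u p * spd i (spd k u) p)) := by
          refine Finset.sum_congr rfl fun i _ => ?_
          rw [congrFun (spd_z hu hpos α i) p]
          ring
      _ = _ := by rw [sum_lin2]
  -- Assemble
  rw [tpd_z hu hpos α p, hpde p hp, hsum3, hLap, hmid]
  simp only [lap]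
  have hU : (0 : ℝ) < u p := hpos p
  have h1 : u p ^ (α - 1) = u p ^ α / u p := by
    rw [Real.rpow_sub hU, Real.rpow_one]
  have h2 : u p ^ (α - 1 - 1) = u p ^ α / (u p * u p) := by
    rw [show α - 1 - 1 = α - 2 by ring, Real.rpow_sub hU, show (2:ℝ) = ((2:ℕ):ℝ) by norm_num,
      Real.rpow_natCast]
    norm_num [pow_two]
  have h3 : u p ^ (α + 1) = u p ^ α * u p := by
    rw [Real.rpow_add hU, Real.rpow_one]
  have h4 : u p ^ (-1 : ℝ) = (u p)⁻¹ := Real.rpow_neg_one (u p)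
  have h5 : u p ^ (-α - 1) = (u p ^ α * u p)⁻¹ := by
    rw [show -α - 1 = -(α + 1) by ring, Real.rpow_neg hU.le, Real.rpow_add hU, Real.rpow_one]
  rw [h1, h2, h3, h4, h5]
  have hA : (0 : ℝ) < u p ^ α := Real.rpow_pos_of_pos hU α
  field_simp
  ring
end

section
/- Let N ≥ 1, let γ, α ∈ ℝ with α² + (γ+1)α + N/2 ≤ 0, let f : ℝ × ℝ → ℝ be continuously differentiable, and let u : EuclideanSpace ℝ (Fin N) × ℝ → ℝ be smooth, everywhere positive, and satisfy u_t = u·Δu − γ·|∇u|² + f(t,u) on an open set (∇, Δ in the spatial variable). Set w = ½∑_{i=1}^N (∂_{x_i} u)² and z = u^α·w. Then on that set z satisfies the differential inequality z_t ≤ u·Δz − 2(α+γ)·∑_{i=1}^N (∂_{x_i}u)·(∂_{x_i}z) + (2(∂_u f)(t,u) + α·u^(−1)·f(t,u))·z. -/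
noncomputable def pd {N : ℕ} (a : EuclideanSpace ℝ (Fin N) × ℝ)
    (v : EuclideanSpace ℝ (Fin N) × ℝ → ℝ) (p : EuclideanSpace ℝ (Fin N) × ℝ) : ℝ :=
  fderiv ℝ v p a

section Toolkit

variable {N : ℕ} {v g h : EuclideanSpace ℝ (Fin N) × ℝ → ℝ}
  {a p : EuclideanSpace ℝ (Fin N) × ℝ}

lemma ContDiffTop.dAt (hv : ContDiff ℝ (⊤ : ℕ∞) v) (p : EuclideanSpace ℝ (Fin N) × ℝ) :
    DifferentiableAt ℝ v p := (hv.differentiable (by simp)).differentiableAt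

lemma pd_smooth (a : EuclideanSpace ℝ (Fin N) × ℝ) (hv : ContDiff ℝ (⊤ : ℕ∞) v) :
    ContDiff ℝ (⊤ : ℕ∞) (pd a v) := by
  have h1 : ContDiff ℝ (⊤ : ℕ∞) (fderiv ℝ v) := hv.fderiv_right (by simp)
  exact h1.clm_apply contDiff_const

lemma pd_add (hg : DifferentiableAt ℝ g p) (hh : DifferentiableAt ℝ h p) :
    pd a (fun q => g q + h q) p = pd a g p + pd a h p := by
  simp [pd, fderiv_fun_add hg hh]

lemma pd_sub (hg : DifferentiableAt ℝ g p) (hh : DifferentiableAt ℝ h p) :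
    pd a (fun q => g q - h q) p = pd a g p - pd a h p := by
  simp [pd, fderiv_fun_sub hg hh]

lemma pd_mul (hg : DifferentiableAt ℝ g p) (hh : DifferentiableAt ℝ h p) :
    pd a (fun q => g q * h q) p = g p * pd a h p + h p * pd a g p := by
  simp [pd, fderiv_fun_mul hg hh]

lemma pd_const_mul (c : ℝ) (hg : DifferentiableAt ℝ g p) :
    pd a (fun q => c * g q) p = c * pd a g p := by
  simp [pd, fderiv_const_mul hg c]

lemma pd_sum {ι : Type*} (s : Finset ι) (F : ι → EuclideanSpace ℝ (Fin N) × ℝ → ℝ)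
    (hF : ∀ i ∈ s, DifferentiableAt ℝ (F i) p) :
    pd a (fun q => ∑ i ∈ s, F i q) p = ∑ i ∈ s, pd a (F i) p := by
  simp [pd, fderiv_fun_sum hF]

lemma pd_sq (hg : DifferentiableAt ℝ g p) :
    pd a (fun q => g q ^ 2) p = 2 * g p * pd a g p := by
  have e : (fun q => g q ^ 2) = fun q => g q * g q := by ext q; ring
  rw [e, pd_mul hg hg]; ring

lemma hasFDerivAt_rpow_comp (β : ℝ) (hg : DifferentiableAt ℝ g p) (h0 : g p ≠ 0) :
    HasFDerivAt (fun q => g q ^ β) ((β * g p ^ (β - 1)) • fderiv ℝ g p) p := by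
  exact (Real.hasDerivAt_rpow_const (x := g p) (p := β) (Or.inl h0)).comp_hasFDerivAt p
    hg.hasFDerivAt

lemma diff_rpow (β : ℝ) (hg : DifferentiableAt ℝ g p) (h0 : g p ≠ 0) :
    DifferentiableAt ℝ (fun q => g q ^ β) p :=
  (hasFDerivAt_rpow_comp β hg h0).differentiableAt

lemma pd_rpow (β : ℝ) (hg : DifferentiableAt ℝ g p) (h0 : g p ≠ 0) :
    pd a (fun q => g q ^ β) p = β * g p ^ (β - 1) * pd a g p := by
  rw [pd, (hasFDerivAt_rpow_comp β hg h0).fderiv, ContinuousLinearMap.smul_apply,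
    smul_eq_mul]
  rfl

lemma pd_comm (hv : ContDiff ℝ (⊤ : ℕ∞) v) (a b p : EuclideanSpace ℝ (Fin N) × ℝ) :
    pd a (pd b v) p = pd b (pd a v) p := by
  have hd : ContDiff ℝ (⊤ : ℕ∞) (fderiv ℝ v) := hv.fderiv_right (by simp)
  have hdp : DifferentiableAt ℝ (fderiv ℝ v) p := (hd.differentiable (by simp)).differentiableAt
  have hsymm : IsSymmSndFDerivAt ℝ v p := hv.contDiffAt.isSymmSndFDerivAt (by rw [minSmoothness_of_isRCLikeNormedField]; exact WithTop.coe_le_coe.mpr le_top)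
  have key : ∀ c d : EuclideanSpace ℝ (Fin N) × ℝ,
      fderiv ℝ (fun q => fderiv ℝ v q c) p d = fderiv ℝ (fderiv ℝ v) p d c := by
    intro c d
    have e := fderiv_clm_apply (c := fderiv ℝ v) (u := fun _ => c) hdp
      (differentiableAt_const _)
    simp only [fderiv_fun_const] at e
    rw [show (fun q => fderiv ℝ v q c) = (fun q => (fderiv ℝ v q) ((fun _ => c) q)) from rfl, e]
    simp
  calc pd a (pd b v) p = fderiv ℝ (fderiv ℝ v) p a b := key b a
    _ = fderiv ℝ (fderiv ℝ v) p b a := hsymm.eq a b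
    _ = pd b (pd a v) p := (key a b).symm

lemma pd_comm3 (hv : ContDiff ℝ (⊤ : ℕ∞) v) (a b p : EuclideanSpace ℝ (Fin N) × ℝ) :
    pd a (pd a (pd b v)) p = pd b (pd a (pd a v)) p := by
  have h1 : pd a (pd b v) = pd b (pd a v) := funext (fun q => pd_comm hv a b q)
  rw [h1]
  exact pd_comm (pd_smooth a hv) a b p

lemma pd_fcomp (f : ℝ × ℝ → ℝ) (hf : ContDiff ℝ 1 f)
    (u : EuclideanSpace ℝ (Fin N) × ℝ → ℝ) (hu : ContDiff ℝ (⊤ : ℕ∞) u)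
    (b : EuclideanSpace ℝ (Fin N)) (p : EuclideanSpace ℝ (Fin N) × ℝ) :
    pd (b, 0) (fun q => f (q.2, u q)) p
      = deriv (fun s => f (p.2, s)) (u p) * pd (b, 0) u p := by
  have hup : HasFDerivAt u (fderiv ℝ u p) p := (ContDiffTop.dAt hu p).hasFDerivAt
  have hg : HasFDerivAt (fun q : EuclideanSpace ℝ (Fin N) × ℝ => (q.2, u q))
      ((ContinuousLinearMap.snd ℝ (EuclideanSpace ℝ (Fin N)) ℝ).prod (fderiv ℝ u p)) p :=
    HasFDerivAt.prodMk hasFDerivAt_snd hup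
  have hfd : HasFDerivAt f (fderiv ℝ f (p.2, u p)) (p.2, u p) :=
    ((hf.differentiable one_ne_zero) (p.2, u p)).hasFDerivAt
  have hcmp : HasFDerivAt (fun q : EuclideanSpace ℝ (Fin N) × ℝ => f (q.2, u q))
      ((fderiv ℝ f (p.2, u p)).comp
        ((ContinuousLinearMap.snd ℝ (EuclideanSpace ℝ (Fin N)) ℝ).prod (fderiv ℝ u p))) p :=
    hfd.comp p hg
  have hderiv : HasDerivAt (fun s : ℝ => f (p.2, s)) (fderiv ℝ f (p.2, u p) (0, 1)) (u p) := by
    have hcurve : HasDerivAt (fun s : ℝ => ((p.2 : ℝ), s)) ((0 : ℝ), (1 : ℝ)) (u p) :=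
      HasDerivAt.prodMk (hasDerivAt_const _ _) (hasDerivAt_id _)
    exact hfd.comp_hasDerivAt (u p) hcurve
  rw [pd, hcmp.fderiv, hderiv.deriv]
  have : ((ContinuousLinearMap.snd ℝ (EuclideanSpace ℝ (Fin N)) ℝ).prod (fderiv ℝ u p))
      (b, 0) = ((0 : ℝ), fderiv ℝ u p (b, 0)) := by
    simp
  rw [ContinuousLinearMap.comp_apply, this]
  have h2 : ((0:ℝ), fderiv ℝ u p (b,0)) = (fderiv ℝ u p (b,0)) • ((0:ℝ), (1:ℝ)) := by
    simp [Prod.smul_def]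
  rw [h2, ContinuousLinearMap.map_smul, smul_eq_mul]
  rw [pd]; ring

end Toolkit
noncomputable def ee {N : ℕ} (i : Fin N) : EuclideanSpace ℝ (Fin N) × ℝ :=
  (EuclideanSpace.single i 1, 0)

noncomputable def tdir (N : ℕ) : EuclideanSpace ℝ (Fin N) × ℝ := (0, 1)

lemma spd_eq_pd' {N : ℕ} (i : Fin N) (v : EuclideanSpace ℝ (Fin N) × ℝ → ℝ) :
    spd i v = pd (ee i) v := rfl

lemma tpd_eq_pd' {N : ℕ} (v : EuclideanSpace ℝ (Fin N) × ℝ → ℝ) :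
    tpd v = pd (tdir N) v := rfl

lemma pd_fcomp' {N : ℕ} (f : ℝ × ℝ → ℝ) (hf : ContDiff ℝ 1 f)
    (u : EuclideanSpace ℝ (Fin N) × ℝ → ℝ) (hu : ContDiff ℝ (⊤ : ℕ∞) u)
    (i : Fin N) (p : EuclideanSpace ℝ (Fin N) × ℝ) :
    pd (ee i) (fun q => f (q.2, u q)) p
      = deriv (fun s => f (p.2, s)) (u p) * pd (ee i) u p :=
  pd_fcomp f hf u hu (EuclideanSpace.single i 1) p

set_option maxHeartbeats 2000000 in
/-- Inequality (22): under the structural condition `α² + (γ+1)α + N/2 ≤ 0`,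
`z = u^α · ½|∇u|²` satisfies the differential inequality
`z_t ≤ uΔz − 2(α+γ)∑ᵢ(∂ᵢu)(∂ᵢz) + (2f_u + α u⁻¹ f)z` along positive classical
solutions of `u_t = uΔu − γ|∇u|² + f(t,u)`. -/
theorem evolution_inequality_z (N : ℕ) (hN : 1 ≤ N) (γ α : ℝ)
    (hα : α ^ 2 + (γ + 1) * α + (N : ℝ) / 2 ≤ 0)
    (f : ℝ × ℝ → ℝ) (hf : ContDiff ℝ 1 f)
    (u : EuclideanSpace ℝ (Fin N) × ℝ → ℝ) (hu : ContDiff ℝ (⊤ : ℕ∞) u)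
    (hpos : ∀ p, 0 < u p)
    (Ω : Set (EuclideanSpace ℝ (Fin N) × ℝ)) (hΩ : IsOpen Ω)
    (hpde : ∀ p ∈ Ω,
      tpd u p = u p * lap u p - γ * (∑ i : Fin N, (spd i u p) ^ 2) + f (p.2, u p)) :
    ∀ p ∈ Ω,
      tpd (fun q => u q ^ α * ((1 / 2) * ∑ i : Fin N, (spd i u q) ^ 2)) p
        ≤ u p * lap (fun q => u q ^ α * ((1 / 2) * ∑ i : Fin N, (spd i u q) ^ 2)) p
          - 2 * (α + γ) * ∑ i : Fin N,
              spd i u p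
                * spd i (fun q => u q ^ α * ((1 / 2) * ∑ k : Fin N, (spd k u q) ^ 2)) p
          + (2 * deriv (fun s => f (p.2, s)) (u p) + α * u p ^ (-1 : ℝ) * f (p.2, u p))
              * (u p ^ α * ((1 / 2) * ∑ i : Fin N, (spd i u p) ^ 2)) := by
  intro p hp
  have hUpos : 0 < u p := hpos p
  have hUne : u p ≠ 0 := hUpos.ne'
  simp only [lap, spd_eq_pd', tpd_eq_pd'] at hpde ⊢
  -- differentiability helpers
  have D : ∀ {φ : EuclideanSpace ℝ (Fin N) × ℝ → ℝ}, ContDiff ℝ (⊤ : ℕ∞) φ →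
      ∀ q, DifferentiableAt ℝ φ q := fun h q => ContDiffTop.dAt h q
  have hu1 : ∀ a, ContDiff ℝ (⊤ : ℕ∞) (pd a u) := fun a => pd_smooth a hu
  have hu2 : ∀ a b, ContDiff ℝ (⊤ : ℕ∞) (pd a (pd b u)) := fun a b => pd_smooth a (hu1 b)
  set w : EuclideanSpace ℝ (Fin N) × ℝ → ℝ :=
    fun q => (1 / 2) * ∑ i : Fin N, pd (ee i) u q ^ 2 with hw_def
  have hwS : ContDiff ℝ (⊤ : ℕ∞) w :=
    contDiff_const.mul (ContDiff.sum fun i _ => (hu1 (ee i)).pow 2)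
  have hwS1 : ∀ a, ContDiff ℝ (⊤ : ℕ∞) (pd a w) := fun a => pd_smooth a hwS
  have hZfun : (fun q => u q ^ α * ((1 / 2) * ∑ i : Fin N, pd (ee i) u q ^ 2))
      = fun q => u q ^ α * w q := by funext q; simp only [hw_def]
  rw [hZfun]
  have hwp_goal : ((1:ℝ) / 2) * ∑ i : Fin N, pd (ee i) u p ^ 2 = w p := by
    simp only [hw_def]
  rw [hwp_goal]
  set Z : EuclideanSpace ℝ (Fin N) × ℝ → ℝ := fun q => u q ^ α * w q with hZ_def
  set lapf : EuclideanSpace ℝ (Fin N) × ℝ → ℝ :=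
    fun q => ∑ j : Fin N, pd (ee j) (pd (ee j) u) q with hlapf_def
  have hlapfS : ContDiff ℝ (⊤ : ℕ∞) lapf := ContDiff.sum fun j _ => hu2 (ee j) (ee j)
  have hfcS : ∀ q, DifferentiableAt ℝ (fun q' => f (q'.2, u q')) q := by
    intro q
    have h1 : DifferentiableAt ℝ f (q.2, u q) := (hf.differentiable one_ne_zero) _
    exact h1.comp q ((differentiableAt_snd).prodMk (D hu q))
  have hrpα : ∀ q, DifferentiableAt ℝ (fun q' => u q' ^ α) q :=
    fun q => diff_rpow α (D hu q) (hpos q).ne'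
  have hrpα1 : ∀ q, DifferentiableAt ℝ (fun q' => u q' ^ (α - 1)) q :=
    fun q => diff_rpow (α - 1) (D hu q) (hpos q).ne'
  -- first-derivative identities
  have L1 : ∀ a q, pd a w q = ∑ i : Fin N, pd (ee i) u q * pd a (pd (ee i) u) q := by
    intro a q
    rw [hw_def]
    rw [pd_const_mul _ (DifferentiableAt.fun_sum fun i _ => ((D (hu1 (ee i)) q).fun_pow 2)),
        pd_sum Finset.univ (fun i => fun q' => pd (ee i) u q' ^ 2)
          (fun i _ => (D (hu1 (ee i)) q).pow 2), Finset.mul_sum]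
    exact Finset.sum_congr rfl fun i _ => by rw [pd_sq (D (hu1 (ee i)) q)]; ring
  have L2 : ∀ a q, pd a Z q
      = α * u q ^ (α - 1) * pd a u q * w q + u q ^ α * pd a w q := by
    intro a q
    rw [hZ_def, pd_mul (hrpα q) (D hwS q), pd_rpow α (D hu q) (hpos q).ne']
    ring
  have hA2v : ∑ i : Fin N, pd (ee i) u p ^ 2 = 2 * w p := by
    simp only [hw_def]; ring
  -- PDE on Ω, as functions
  set R : EuclideanSpace ℝ (Fin N) × ℝ → ℝ :=
    fun q => u q * lapf q - γ * (2 * w q) + f (q.2, u q) with hR_def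
  have hpde' : ∀ q ∈ Ω, pd (tdir N) u q = R q := by
    intro q hq
    simp only [hR_def, hlapf_def, hw_def]
    rw [hpde q hq]; ring
  have hpdτR : ∀ i : Fin N, pd (ee i) (pd (tdir N) u) p = pd (ee i) R p := by
    intro i
    have hev : pd (tdir N) u =ᶠ[nhds p] R :=
      Filter.eventuallyEq_of_mem (hΩ.mem_nhds hp) hpde'
    show fderiv ℝ (pd (tdir N) u) p (ee i) = fderiv ℝ R p (ee i)
    rw [hev.fderiv_eq]
  have hlapfi : ∀ i : Fin N, pd (ee i) lapf p
      = ∑ j : Fin N, pd (ee i) (pd (ee j) (pd (ee j) u)) p := by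
    intro i
    rw [hlapf_def]
    exact pd_sum Finset.univ (fun j => fun q => pd (ee j) (pd (ee j) u) q)
      (fun j _ => D (hu2 (ee j) (ee j)) p)
  have hlapfp : lapf p = ∑ j : Fin N, pd (ee j) (pd (ee j) u) p := by
    simp only [hlapf_def]
  have hRi : ∀ i : Fin N, pd (ee i) R p
      = u p * pd (ee i) lapf p + lapf p * pd (ee i) u p
        - γ * (2 * pd (ee i) w p)
        + deriv (fun s => f (p.2, s)) (u p) * pd (ee i) u p := by
    intro i
    rw [hR_def]
    have dγ2 : DifferentiableAt ℝ (fun q => 2 * w q) p := (D hwS p).const_mul 2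
    have dγ : DifferentiableAt ℝ (fun q => γ * (2 * w q)) p := dγ2.const_mul γ
    have d1 : DifferentiableAt ℝ (fun q => u q * lapf q) p := (D hu p).mul (D hlapfS p)
    rw [pd_add (d1.fun_sub dγ) (hfcS p), pd_sub d1 dγ, pd_mul (D hu p) (D hlapfS p),
        pd_const_mul γ dγ2, pd_const_mul 2 (D hwS p), pd_fcomp' f hf u hu i p]
  -- time derivative of w
  have hτw : pd (tdir N) w p = ∑ i : Fin N, pd (ee i) u p * pd (ee i) R p := by
    rw [L1 (tdir N) p]
    exact Finset.sum_congr rfl fun i _ => by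
      rw [pd_comm hu (tdir N) (ee i) p, hpdτR i]
  have hτwB : pd (tdir N) w p
      = (∑ j : Fin N, pd (ee j) (pd (ee j) u) p) * (2 * w p)
        + u p * (∑ i : Fin N, pd (ee i) u p * pd (ee i) lapf p)
        - 2 * γ * (∑ i : Fin N, pd (ee i) u p * pd (ee i) w p)
        + deriv (fun s => f (p.2, s)) (u p) * (2 * w p) := by
    rw [hτw]
    have step : ∀ i : Fin N, pd (ee i) u p * pd (ee i) R p
        = (∑ j : Fin N, pd (ee j) (pd (ee j) u) p) * (pd (ee i) u p ^ 2)
          + u p * (pd (ee i) u p * pd (ee i) lapf p)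
          - 2 * γ * (pd (ee i) u p * pd (ee i) w p)
          + deriv (fun s => f (p.2, s)) (u p) * (pd (ee i) u p ^ 2) := by
      intro i
      rw [hRi i, hlapfp]; ring
    calc ∑ i : Fin N, pd (ee i) u p * pd (ee i) R p
        = ∑ i : Fin N,
            ((∑ j : Fin N, pd (ee j) (pd (ee j) u) p) * (pd (ee i) u p ^ 2)
              + u p * (pd (ee i) u p * pd (ee i) lapf p)
              - 2 * γ * (pd (ee i) u p * pd (ee i) w p)
              + deriv (fun s => f (p.2, s)) (u p) * (pd (ee i) u p ^ 2)) :=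
          Finset.sum_congr rfl fun i _ => step i
      _ = _ := by
          rw [Finset.sum_add_distrib, Finset.sum_sub_distrib, Finset.sum_add_distrib,
            ← Finset.mul_sum, ← Finset.mul_sum, ← Finset.mul_sum, ← Finset.mul_sum, hA2v]
  -- time derivative of Z
  have hτZfin : pd (tdir N) Z p
      = α * u p ^ (α - 1)
          * (u p * (∑ j : Fin N, pd (ee j) (pd (ee j) u) p) - γ * (2 * w p) + f (p.2, u p))
          * w p
        + u p ^ α *
          ((∑ j : Fin N, pd (ee j) (pd (ee j) u) p) * (2 * w p)
            + u p * (∑ i : Fin N, pd (ee i) u p * pd (ee i) lapf p)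
            - 2 * γ * (∑ i : Fin N, pd (ee i) u p * pd (ee i) w p)
            + deriv (fun s => f (p.2, s)) (u p) * (2 * w p)) := by
    have hRp : R p = u p * lapf p - γ * (2 * w p) + f (p.2, u p) := by
      simp only [hR_def]
    rw [L2 (tdir N) p, hpde' p hp, hRp, hτwB, hlapfp]
  -- second derivatives of Z
  have hZjfun : ∀ j : Fin N, pd (ee j) Z
      = fun q => α * (u q ^ (α - 1) * (pd (ee j) u q * w q)) + u q ^ α * pd (ee j) w q := by
    intro j; funext q; rw [L2 (ee j) q]; ring
  have hwjfun : ∀ j : Fin N, pd (ee j) w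
      = fun q => ∑ i : Fin N, pd (ee i) u q * pd (ee j) (pd (ee i) u) q :=
    fun j => funext (L1 (ee j))
  have hGj : ∀ j : Fin N, pd (ee j) (pd (ee j) w) p
      = ∑ i : Fin N,
          (pd (ee i) u p * pd (ee j) (pd (ee j) (pd (ee i) u)) p
            + pd (ee j) (pd (ee i) u) p * pd (ee j) (pd (ee i) u) p) := by
    intro j
    rw [hwjfun j]
    rw [pd_sum Finset.univ (fun i => fun q => pd (ee i) u q * pd (ee j) (pd (ee i) u) q)
      (fun i _ => (D (hu1 (ee i)) p).mul (D (hu2 (ee j) (ee i)) p))]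
    exact Finset.sum_congr rfl fun i _ =>
      pd_mul (D (hu1 (ee i)) p) (D (hu2 (ee j) (ee i)) p)
  have step2 : ∀ j : Fin N, pd (ee j) (pd (ee j) Z) p
      = α * (α - 1) * u p ^ (α - 2) * w p * (pd (ee j) u p ^ 2)
        + α * u p ^ (α - 1) * w p * (pd (ee j) (pd (ee j) u) p)
        + 2 * α * u p ^ (α - 1) * (pd (ee j) u p * pd (ee j) w p)
        + u p ^ α * (∑ i : Fin N, pd (ee i) u p * pd (ee i) (pd (ee j) (pd (ee j) u)) p)
        + u p ^ α * (∑ i : Fin N, pd (ee j) (pd (ee i) u) p ^ 2) := by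
    intro j
    rw [hZjfun j]
    have d1 : DifferentiableAt ℝ (fun q => pd (ee j) u q * w q) p :=
      (D (hu1 (ee j)) p).mul (D hwS p)
    have d2 : DifferentiableAt ℝ (fun q => u q ^ (α - 1) * (pd (ee j) u q * w q)) p :=
      (hrpα1 p).mul d1
    have d3 : DifferentiableAt ℝ
        (fun q => α * (u q ^ (α - 1) * (pd (ee j) u q * w q))) p := d2.const_mul α
    have d4 : DifferentiableAt ℝ (fun q => u q ^ α * pd (ee j) w q) p :=
      (hrpα p).mul (D (hwS1 (ee j)) p)
    rw [pd_add d3 d4, pd_const_mul α d2, pd_mul (hrpα1 p) d1,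
        pd_mul (D (hu1 (ee j)) p) (D hwS p), pd_mul (hrpα p) (D (hwS1 (ee j)) p),
        pd_rpow (α - 1) (D hu p) hUne, pd_rpow α (D hu p) hUne, hGj j]
    have e1 : (∑ i : Fin N,
          (pd (ee i) u p * pd (ee j) (pd (ee j) (pd (ee i) u)) p
            + pd (ee j) (pd (ee i) u) p * pd (ee j) (pd (ee i) u) p))
        = (∑ i : Fin N, pd (ee i) u p * pd (ee i) (pd (ee j) (pd (ee j) u)) p)
          + ∑ i : Fin N, pd (ee j) (pd (ee i) u) p ^ 2 := by
      rw [Finset.sum_add_distrib]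
      congr 1
      · exact Finset.sum_congr rfl fun i _ => by rw [pd_comm3 hu (ee j) (ee i) p]
      · exact Finset.sum_congr rfl fun i _ => by ring
    rw [e1, show (α - 1 - 1 : ℝ) = α - 2 from by ring]
    ring
  have e2 : (∑ j : Fin N, ∑ i : Fin N,
        pd (ee i) u p * pd (ee i) (pd (ee j) (pd (ee j) u)) p)
      = ∑ i : Fin N, pd (ee i) u p * pd (ee i) lapf p := by
    rw [Finset.sum_comm]
    exact Finset.sum_congr rfl fun i _ => by rw [← Finset.mul_sum, ← hlapfi i]
  have hlapZ : (∑ j : Fin N, pd (ee j) (pd (ee j) Z) p)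
      = α * (α - 1) * u p ^ (α - 2) * w p * (2 * w p)
        + α * u p ^ (α - 1) * w p * (∑ j : Fin N, pd (ee j) (pd (ee j) u) p)
        + 2 * α * u p ^ (α - 1) * (∑ j : Fin N, pd (ee j) u p * pd (ee j) w p)
        + u p ^ α * (∑ i : Fin N, pd (ee i) u p * pd (ee i) lapf p)
        + u p ^ α * (∑ j : Fin N, ∑ i : Fin N, pd (ee j) (pd (ee i) u) p ^ 2) := by
    calc (∑ j : Fin N, pd (ee j) (pd (ee j) Z) p)
        = ∑ j : Fin N,
            (α * (α - 1) * u p ^ (α - 2) * w p * (pd (ee j) u p ^ 2)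
              + α * u p ^ (α - 1) * w p * (pd (ee j) (pd (ee j) u) p)
              + 2 * α * u p ^ (α - 1) * (pd (ee j) u p * pd (ee j) w p)
              + u p ^ α * (∑ i : Fin N, pd (ee i) u p * pd (ee i) (pd (ee j) (pd (ee j) u)) p)
              + u p ^ α * (∑ i : Fin N, pd (ee j) (pd (ee i) u) p ^ 2)) :=
          Finset.sum_congr rfl fun j _ => step2 j
      _ = _ := by
          rw [Finset.sum_add_distrib, Finset.sum_add_distrib, Finset.sum_add_distrib,
            Finset.sum_add_distrib, ← Finset.mul_sum, ← Finset.mul_sum, ← Finset.mul_sum,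
            ← Finset.mul_sum, ← Finset.mul_sum, hA2v, e2]
  have hsumZj : (∑ j : Fin N, pd (ee j) u p * pd (ee j) Z p)
      = α * u p ^ (α - 1) * w p * (2 * w p)
        + u p ^ α * (∑ j : Fin N, pd (ee j) u p * pd (ee j) w p) := by
    have step3 : ∀ j : Fin N, pd (ee j) u p * pd (ee j) Z p
        = α * u p ^ (α - 1) * w p * (pd (ee j) u p ^ 2)
          + u p ^ α * (pd (ee j) u p * pd (ee j) w p) := by
      intro j; rw [L2 (ee j) p]; ring
    calc (∑ j : Fin N, pd (ee j) u p * pd (ee j) Z p)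
        = ∑ j : Fin N,
            (α * u p ^ (α - 1) * w p * (pd (ee j) u p ^ 2)
              + u p ^ α * (pd (ee j) u p * pd (ee j) w p)) :=
          Finset.sum_congr rfl fun j _ => step3 j
      _ = _ := by
          rw [Finset.sum_add_distrib, ← Finset.mul_sum, ← Finset.mul_sum, hA2v]
  -- power bookkeeping
  have r1 : u p ^ (α - 1) = u p ^ (α - 2) * u p := by
    rw [show (α - 1 : ℝ) = (α - 2) + 1 from by ring, Real.rpow_add_one hUne]
  have r2 : u p ^ α = u p ^ (α - 2) * u p * u p := by
    conv_lhs => rw [show (α : ℝ) = (α - 2) + 1 + 1 from by ring]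
    rw [Real.rpow_add_one hUne, Real.rpow_add_one hUne]
  have r3 : u p ^ (-1 : ℝ) * u p ^ α = u p ^ (α - 2) * u p := by
    rw [← Real.rpow_add hUpos, show (-1 : ℝ) + α = (α - 2) + 1 from by ring,
      Real.rpow_add_one hUne]
  have hcoef : (2 * deriv (fun s => f (p.2, s)) (u p) + α * u p ^ (-1 : ℝ) * f (p.2, u p))
        * (u p ^ α * w p)
      = 2 * deriv (fun s => f (p.2, s)) (u p) * (u p ^ (α - 2) * u p * u p) * w p
        + α * f (p.2, u p) * (u p ^ (α - 2) * u p) * w p := by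
    have expand : (2 * deriv (fun s => f (p.2, s)) (u p)
          + α * u p ^ (-1 : ℝ) * f (p.2, u p)) * (u p ^ α * w p)
        = 2 * deriv (fun s => f (p.2, s)) (u p) * (u p ^ α) * w p
          + α * f (p.2, u p) * (u p ^ (-1 : ℝ) * u p ^ α) * w p := by ring
    rw [expand, r3, r2]
  rw [hτZfin, hlapZ, hsumZj, hcoef, r1, r2]
  -- final algebraic inequality
  have hWnn : 0 ≤ w p := by simp only [hw_def]; positivity
  have hV : 0 < u p ^ (α - 2 : ℝ) := Real.rpow_pos_of_pos hUpos _
  have hN1 : (1 : ℝ) ≤ (N : ℝ) := by exact_mod_cast hN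
  have hdiag : (∑ j : Fin N, pd (ee j) (pd (ee j) u) p ^ 2)
      ≤ ∑ j : Fin N, ∑ i : Fin N, pd (ee j) (pd (ee i) u) p ^ 2 :=
    Finset.sum_le_sum fun j _ =>
      Finset.single_le_sum (fun i _ => sq_nonneg (pd (ee j) (pd (ee i) u) p))
        (Finset.mem_univ j)
  have hCS : (∑ j : Fin N, pd (ee j) (pd (ee j) u) p) ^ 2
      ≤ (N : ℝ) * ∑ j : Fin N, pd (ee j) (pd (ee j) u) p ^ 2 := by
    have := sq_sum_le_card_mul_sum_sq (s := (Finset.univ : Finset (Fin N)))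
      (f := fun j => pd (ee j) (pd (ee j) u) p)
    simpa using this
  have hD2 : (∑ j : Fin N, pd (ee j) (pd (ee j) u) p) ^ 2
      ≤ (N : ℝ) * ∑ j : Fin N, ∑ i : Fin N, pd (ee j) (pd (ee i) u) p ^ 2 := by
    calc (∑ j : Fin N, pd (ee j) (pd (ee j) u) p) ^ 2
        ≤ (N : ℝ) * ∑ j : Fin N, pd (ee j) (pd (ee j) u) p ^ 2 := hCS
      _ ≤ (N : ℝ) * ∑ j : Fin N, ∑ i : Fin N, pd (ee j) (pd (ee i) u) p ^ 2 :=
          mul_le_mul_of_nonneg_left hdiag (by linarith)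
  have hαkey : α * (α + γ + 1) ≤ -((N : ℝ) / 2) := by nlinarith [hα]
  set B := ∑ j : Fin N, pd (ee j) (pd (ee j) u) p with hB_def
  set D2 := ∑ j : Fin N, ∑ i : Fin N, pd (ee j) (pd (ee i) u) p ^ 2 with hD2_def
  have hD2nn : 0 ≤ D2 := by
    rw [hD2_def]; positivity
  have key : 2 * u p * w p * B + 2 * α * (α + γ + 1) * w p ^ 2 ≤ u p ^ 2 * D2 := by
    have k1 : u p ^ 2 * B ^ 2 ≤ u p ^ 2 * ((N : ℝ) * D2) :=
      mul_le_mul_of_nonneg_left hD2 (sq_nonneg _)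
    have k2 : 2 * (N : ℝ) * w p ^ 2 * (α * (α + γ + 1))
        ≤ 2 * (N : ℝ) * w p ^ 2 * (-((N : ℝ) / 2)) :=
      mul_le_mul_of_nonneg_left hαkey (by positivity)
    have k3 : 0 ≤ (u p * B - (N : ℝ) * w p) ^ 2 := sq_nonneg _
    nlinarith [k1, k2, k3, hN1, hUpos, hWnn, hD2nn, sq_nonneg (u p * B)]
  have mainmul : u p ^ (α - 2 : ℝ) * u p
        * (2 * u p * w p * B + 2 * α * (α + γ + 1) * w p ^ 2)
      ≤ u p ^ (α - 2 : ℝ) * u p * (u p ^ 2 * D2) :=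
    mul_le_mul_of_nonneg_left key (le_of_lt (mul_pos hV hUpos))
  nlinarith [mainmul]
end
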